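/- Let V be a nonempty bounded open subset of ℝⁿ, let f : cl(V) → ℝⁿ be continuous on cl(V) and C¹ on V, and let b ∈ ℝⁿ be such that b ∉ f(∂V) and for every x ∈ V with f(x) = b the derivative Df(x) is invertible. Then the set f^{-1}({b}) is finite. -/

import Mathlib

/-!
The fibre `S = {x ∈ cl V | f x = b}` is compact, being closed in the compact set `cl V`. Since
`b ∉ f(∂V)` it lies in the open set `V`, where `f` is differentiable; at each of its points the
derivative is injective, hence antilipschitz, so `f z ≠ b` for `z ≠ x` near `x`. Thus `S` is
discrete, and a compact discrete set is finite.
-/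

open Set Filter Topology

theorem HasFDerivAt.eventually_ne_of_det_ne_zero {𝕜 E : Type*} [NontriviallyNormedField 𝕜]
    [CompleteSpace 𝕜] [NormedAddCommGroup E] [NormedSpace 𝕜 E] [FiniteDimensional 𝕜 E]
    {f : E → E} {f' : E →L[𝕜] E} {x : E} (hf : HasFDerivAt f f' x) (hdet : f'.det ≠ 0) :
    ∀ᶠ z in 𝓝[≠] x, f z ≠ f x := by
  rw [← f'.coe_toContinuousLinearEquivOfDetNeZero hdet] at hf
  exact hf.eventually_ne ⟨_, (f'.toContinuousLinearEquivOfDetNeZero hdet).antilipschitz⟩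

theorem IsOpen.sep_closure_subset_of_notMem_image_frontier {X Y : Type*} [TopologicalSpace X]
    {V : Set X} (hV : IsOpen V) {f : X → Y} {b : Y} (hb : b ∉ f '' frontier V) :
    {x ∈ closure V | f x = b} ⊆ V := fun x ⟨hxV, hfx⟩ ↦ by
  by_contra hx
  exact hb ⟨x, hV.frontier_eq ▸ ⟨hxV, hx⟩, hfx⟩

theorem statement13_general (n : ℕ) (V : Set (EuclideanSpace ℝ (Fin n)))
    (hopen : IsOpen V) (hbdd : Bornology.IsBounded V)
    (f : EuclideanSpace ℝ (Fin n) → EuclideanSpace ℝ (Fin n))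
    (hcont : ContinuousOn f (closure V))
    (hC1 : ContDiffOn ℝ 1 f V)
    (b : EuclideanSpace ℝ (Fin n))
    (hb : b ∉ f '' (frontier V))
    (hreg : ∀ x ∈ V, f x = b → LinearMap.det (fderiv ℝ f x).toLinearMap ≠ 0) :
    {x ∈ closure V | f x = b}.Finite := by
  have hcompact : IsCompact {x ∈ closure V | f x = b} :=
    hbdd.isCompact_closure.of_isClosed_subset
      (hcont.preimage_isClosed_of_isClosed isClosed_closure isClosed_singleton) inter_subset_left
  refine hcompact.finite (isDiscrete_iff_nhdsNE.2 fun x hx ↦ inf_principal_eq_bot.2 ?_)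
  have hxV : x ∈ V := hopen.sep_closure_subset_of_notMem_image_frontier hb hx
  have hdiff : DifferentiableAt ℝ f x :=
    (hC1.contDiffAt (hopen.mem_nhds hxV)).differentiableAt one_ne_zero
  filter_upwards [hdiff.hasFDerivAt.eventually_ne_of_det_ne_zero (hreg x hxV hx.2)]
    with z hz hzS
  exact hz (hzS.2.trans hx.2.symm)

/-- Proposition in the Appendix. Let `V` be a nonempty bounded open
subset of `ℝⁿ`, let `f` be continuous on `cl(V)` and `C¹` on `V`, and let `b ∈ ℝⁿ` be such
that `b ∉ f(∂V)` and the derivative `Df(x)` is invertible (`det Df(x) ≠ 0`) at every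
`x ∈ V` with `f(x) = b`. Then the set `f⁻¹({b})` (inside `cl(V)`) is finite. -/
theorem statement13 (n : ℕ) (V : Set (EuclideanSpace ℝ (Fin n))) (hne : V.Nonempty)
    (hopen : IsOpen V) (hbdd : Bornology.IsBounded V)
    (f : EuclideanSpace ℝ (Fin n) → EuclideanSpace ℝ (Fin n))
    (hcont : ContinuousOn f (closure V))
    (hC1 : ContDiffOn ℝ 1 f V)
    (b : EuclideanSpace ℝ (Fin n))
    (hb : b ∉ f '' (frontier V))
    (hreg : ∀ x ∈ V, f x = b → LinearMap.det (fderiv ℝ f x).toLinearMap ≠ 0) :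
    {x ∈ closure V | f x = b}.Finite :=
  statement13_general n V hopen hbdd f hcont hC1 b hb hreg
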